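/- arXiv:1009.4130 — 2 statements merged into one kernel-verified Lean document; each statement's English description precedes it below -/
import Mathlib

section
/- Fix an integer k ≥ 1. There exists a constant c_k > 0 depending only on k such that for every sequence (p_n) ⊆ (0,1) with n·p_n^k → ∞ and n·p_n^{k+1} → 0 as n → ∞, the number f_k of k-dimensional faces of X(n,p_n) satisfies lim_{n→∞} n^{−2k} · p_n^{−(2·C(k+1,2) − 1)} · Var(f_k) = c_k, where C(k+1,2) = (k+1)k/2. -/
/-!
Write `f_k = ∑_S 1[S spans a clique]` over the `(k+1)`-subsets `S`, and let `e = C(k+1,2)`.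
The covariance of the indicators of `S` and `T` depends only on `j = |S ∩ T|`: it is
`p^(2e - C(j,2)) - p^(2e)`, which vanishes for `j ≤ 1`. Counting pairs by `j` gives
`Var f_k = C(n,k+1) ∑_j C(k+1,j) C(n-k-1,k+1-j) (p^(2e - C(j,2)) - p^(2e))`.
Since `p → 0` (as `p = n p^(k+1) / (n p^k)`), the `j = 2` term is asymptotic to
`C(k+1,2) / ((k+1)! (k-1)!) · n^(2k) p^(2e-1)`, while relative to `n^(2k) p^(2e-1)` the
term of index `j ≥ 3` is `O((n p^k)^(2-j))` because `C(j,2) - 1 ≤ k (j-2)`.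
-/

open MeasureTheory ProbabilityTheory Filter
open scoped Classical Topology

/-- The Bernoulli(p) measure on `Bool` (for `p ∈ [0,1]`). -/
noncomputable def bernoulliMeasure (p : ℝ) : Measure Bool :=
  (PMF.bernoulli (min (Real.toNNReal p) 1) (min_le_right _ _)).toMeasure

instance (p : ℝ) : IsProbabilityMeasure (bernoulliMeasure p) := by
  unfold _root_.bernoulliMeasure; infer_instance

/-- The Erdős–Rényi measure: each potential edge of the complete graph on `Fin n`
is present independently with probability `p`. -/
noncomputable def erMeasure (n : ℕ) (p : ℝ) : Measure (Sym2 (Fin n) → Bool) :=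
  Measure.pi fun _ => bernoulliMeasure p

/-- `cliqueCount n j ω` is the number of `j`-dimensional faces of the clique complex
`X(n,p)`, i.e. the number of `(j+1)`-element vertex subsets spanning a complete
subgraph in the graph encoded by `ω`. -/
noncomputable def cliqueCount (n j : ℕ) (ω : Sym2 (Fin n) → Bool) : ℕ :=
  (((Finset.univ : Finset (Fin n)).powersetCard (j + 1)).filter
    (fun S => ∀ i ∈ S, ∀ i' ∈ S, i ≠ i' → ω s(i, i') = true)).card

/-- `EfK n j p = E[f_j]`, the expected number of `j`-dimensional faces of `X(n,p)`. -/
noncomputable def EfK (n j : ℕ) (p : ℝ) : ℝ :=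
  ∫ ω, (cliqueCount n j ω : ℝ) ∂erMeasure n p

/-- The variance of the number of `j`-dimensional faces of `X(n,p)`. -/
noncomputable def varFK (n j : ℕ) (p : ℝ) : ℝ :=
  variance (fun ω => (cliqueCount n j ω : ℝ)) (erMeasure n p)

open Finset Asymptotics

lemma bernoulliMeasure_real_true {p : ℝ} (hp0 : 0 ≤ p) (hp1 : p ≤ 1) :
    (_root_.bernoulliMeasure p).real {true} = p := by
  simp only [measureReal_def, _root_.bernoulliMeasure,
    PMF.toMeasure_apply_singleton _ _ (measurableSet_singleton _),
    min_eq_left (Real.toNNReal_le_one.mpr hp1)]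
  change (p.toNNReal : ENNReal).toReal = p
  simp [hp0]

section AllTrue

variable {E : Type*} {p : ℝ}

def allTrue (A : Finset E) : Set (E → Bool) := {ω | ∀ e ∈ A, ω e = true}

lemma allTrue_union [DecidableEq E] (A B : Finset E) :
    allTrue (A ∪ B) = allTrue A ∩ allTrue B := by
  ext ω
  simp [allTrue, or_imp, forall_and]

lemma allTrue_eq_pi (A : Finset E) :
    allTrue A = Set.univ.pi fun e => if e ∈ A then {true} else Set.univ := by
  ext ω
  simp only [allTrue, Set.mem_ofPred_eq, Set.mem_pi, Set.mem_univ, true_imp_iff]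
  grind

variable [Fintype E]

lemma measureReal_allTrue (hp0 : 0 ≤ p) (hp1 : p ≤ 1) (A : Finset E) :
    (Measure.pi fun _ : E => _root_.bernoulliMeasure p).real (allTrue A) = p ^ #A := by
  rw [allTrue_eq_pi, measureReal_def, Measure.pi_pi, ENNReal.toReal_prod]
  simp_rw [apply_ite, measure_univ, ← measureReal_def, bernoulliMeasure_real_true hp0 hp1,
    ENNReal.toReal_one, prod_ite_mem, univ_inter, prod_const]

lemma integral_indicator_allTrue (hp0 : 0 ≤ p) (hp1 : p ≤ 1) (A : Finset E) :
    ∫ ω, (allTrue A).indicator 1 ω ∂(Measure.pi fun _ : E => _root_.bernoulliMeasure p)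
      = p ^ #A := by
  rw [integral_indicator_one (.of_discrete), measureReal_allTrue hp0 hp1]

lemma variance_sum_indicator_allTrue [DecidableEq E] {ι : Type*} (hp0 : 0 ≤ p) (hp1 : p ≤ 1)
    (s : Finset ι) (A : ι → Finset E) :
    variance (fun ω => ∑ i ∈ s, (allTrue (A i)).indicator (1 : (E → Bool) → ℝ) ω)
        (Measure.pi fun _ : E => _root_.bernoulliMeasure p)
      = ∑ i ∈ s, ∑ j ∈ s, (p ^ #(A i ∪ A j) - p ^ #(A i) * p ^ #(A j)) := by
  rw [variance_eq_sub .of_discrete]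
  simp_rw [Pi.pow_apply, sq, sum_mul_sum, ← Pi.mul_apply _ _ (_ : E → Bool),
    ← Set.inter_indicator_one, ← allTrue_union]
  simp_rw [integral_finsetSum _ fun _ _ => Integrable.of_finite,
    integral_indicator_allTrue hp0 hp1, sum_mul_sum, ← sum_sub_distrib]

end AllTrue

section Cliques

variable {α : Type*} [DecidableEq α]

def cliqueEdges (S : Finset α) : Finset (Sym2 α) := S.offDiag.image Sym2.mk.uncurry

lemma mk_mem_cliqueEdges {S : Finset α} {a b : α} :
    s(a, b) ∈ cliqueEdges S ↔ a ∈ S ∧ b ∈ S ∧ a ≠ b := by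
  simp only [cliqueEdges, mem_image, mem_offDiag, Prod.exists, Function.uncurry_apply_pair,
    Sym2.eq, Sym2.rel_iff', Prod.mk.injEq, Prod.swap_prod_mk]
  grind

lemma card_cliqueEdges (S : Finset α) : #(cliqueEdges S) = (#S).choose 2 :=
  Sym2.card_image_offDiag S

lemma cliqueEdges_inter (S T : Finset α) :
    cliqueEdges (S ∩ T) = cliqueEdges S ∩ cliqueEdges T := by
  ext e
  induction e with | h a b => simp only [mk_mem_cliqueEdges, mem_inter]; tauto

lemma card_cliqueEdges_union (S T : Finset α) :
    #(cliqueEdges S ∪ cliqueEdges T)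
      = (#S).choose 2 + (#T).choose 2 - (#(S ∩ T)).choose 2 := by
  rw [← card_cliqueEdges, ← card_cliqueEdges, ← card_cliqueEdges, cliqueEdges_inter,
    card_union]

lemma mem_allTrue_cliqueEdges {S : Finset α} {ω : Sym2 α → Bool} :
    ω ∈ allTrue (cliqueEdges S) ↔
      ∀ i ∈ S, ∀ i' ∈ S, i ≠ i' → ω s(i, i') = true := by
  simp only [allTrue, Set.mem_ofPred_eq, Sym2.forall, mk_mem_cliqueEdges]
  grind

variable [Fintype α]

lemma card_filter_powersetCard_card_inter_eq (S : Finset α) {r j : ℕ} (hj : j ≤ r) :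
    #{T ∈ powersetCard r univ | #(S ∩ T) = j}
      = (#S).choose j * (Fintype.card α - #S).choose (r - j) := by
  rw [← card_compl, ← card_powersetCard j S, ← card_powersetCard (r - j) Sᶜ,
    ← card_product]
  have hsplit : ∀ U ∈ powersetCard j S, ∀ V ∈ powersetCard (r - j) Sᶜ,
      S ∩ (U ∪ V) = U ∧ (U ∪ V) \ S = V ∧ #(U ∪ V) = r := by
    intro U hU V hV
    rw [mem_powersetCard] at hU
    rw [mem_powersetCard, subset_compl_iff_disjoint_left] at hV
    refine ⟨?_, ?_, ?_⟩
    · rw [inter_union_distrib_left, inter_eq_right.2 hU.1, disjoint_iff_inter_eq_empty.1 hV.1,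
        union_empty]
    · rw [union_sdiff_distrib, sdiff_eq_empty_iff_subset.2 hU.1, hV.1.symm.sdiff_eq_left,
        empty_union]
    · rw [card_union_of_disjoint (hV.1.mono_left hU.1), hU.2, hV.2]
      omega
  symm
  refine card_nbij' (fun UV => UV.1 ∪ UV.2) (fun T => (S ∩ T, T \ S)) ?_ ?_ ?_ ?_
  · rintro ⟨U, V⟩ hUV
    rw [coe_product, Set.mem_prod] at hUV
    obtain ⟨hinter, -, hcard⟩ := hsplit U hUV.1 V hUV.2
    simp [hinter, hcard, (mem_powersetCard.1 hUV.1).2]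
  · intro T hT
    simp only [coe_filter, mem_powersetCard, Set.mem_ofPred_eq] at hT
    simp only [coe_product, Set.mem_prod, mem_coe, mem_powersetCard, inter_subset_left, hT.2]
    refine ⟨⟨trivial, trivial⟩, fun x hx => mem_compl.2 (mem_sdiff.1 hx).2, ?_⟩
    have hcard := card_sdiff_add_card_inter T S
    rw [inter_comm, hT.2, hT.1.2] at hcard
    omega
  · rintro ⟨U, V⟩ hUV
    rw [coe_product, Set.mem_prod] at hUV
    obtain ⟨hinter, hsdiff, -⟩ := hsplit U hUV.1 V hUV.2
    simp [hinter, hsdiff]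
  · intro T _
    simpa only [union_comm, inter_comm] using sdiff_union_inter T S

lemma sum_powersetCard_comp_card_inter {M : Type*} [AddCommMonoid M] {S : Finset α} {r : ℕ}
    (hS : #S = r) (g : ℕ → M) :
    ∑ T ∈ powersetCard r univ, g #(S ∩ T)
      = ∑ j ∈ range (r + 1), (r.choose j * (Fintype.card α - r).choose (r - j)) • g j := by
  have hmaps : ∀ T ∈ powersetCard r univ, #(S ∩ T) ∈ range (r + 1) := fun T _ => by
    rw [mem_range, Nat.lt_succ_iff, ← hS]
    exact card_le_card inter_subset_left
  rw [← sum_fiberwise_of_maps_to hmaps]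
  refine sum_congr rfl fun j hj => ?_
  rw [sum_congr rfl fun T hT => congrArg g (mem_filter.1 hT).2, sum_const,
    card_filter_powersetCard_card_inter_eq S (Nat.lt_succ_iff.1 (mem_range.1 hj)), hS]

end Cliques

lemma cliqueCount_eq_sum_indicator (n j : ℕ) (ω : Sym2 (Fin n) → Bool) :
    (cliqueCount n j ω : ℝ)
      = ∑ S ∈ powersetCard (j + 1) univ, (allTrue (cliqueEdges S)).indicator 1 ω := by
  simp_rw [cliqueCount, card_filter, Nat.cast_sum, Set.indicator_apply, mem_allTrue_cliqueEdges,
    Nat.cast_ite, Nat.cast_one, Nat.cast_zero, Pi.one_apply]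

/-- The summed covariances of the clique indicators of the pairs of `(k+1)`-sets of `Fin n`
that share exactly `j` vertices. -/
noncomputable def overlapTerm (n k j : ℕ) (p : ℝ) : ℝ :=
  n.choose (k + 1) * ((k + 1).choose j * (n - (k + 1)).choose (k + 1 - j)) *
    (p ^ (2 * (k + 1).choose 2 - j.choose 2) - p ^ (2 * (k + 1).choose 2))

lemma varFK_eq_sum_overlapTerm (n k : ℕ) {p : ℝ} (hp0 : 0 ≤ p) (hp1 : p ≤ 1) :
    varFK n k p = ∑ j ∈ range (k + 2), overlapTerm n k j p := by
  simp_rw [varFK, cliqueCount_eq_sum_indicator]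
  rw [erMeasure, variance_sum_indicator_allTrue hp0 hp1]
  set e := (k + 1).choose 2
  have hcov : ∀ S ∈ powersetCard (k + 1) (univ : Finset (Fin n)),
      ∀ T ∈ powersetCard (k + 1) univ,
      p ^ #(cliqueEdges S ∪ cliqueEdges T) - p ^ #(cliqueEdges S) * p ^ #(cliqueEdges T)
        = p ^ (2 * e - (#(S ∩ T)).choose 2) - p ^ (2 * e) := by
    intro S hS T hT
    rw [card_cliqueEdges_union, card_cliqueEdges, card_cliqueEdges, (mem_powersetCard.1 hS).2,
      (mem_powersetCard.1 hT).2, ← pow_add, two_mul]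
  rw [sum_congr rfl fun S hS => (sum_congr rfl (hcov S hS)).trans
    (sum_powersetCard_comp_card_inter (mem_powersetCard.1 hS).2
      fun j => p ^ (2 * e - j.choose 2) - p ^ (2 * e))]
  rw [sum_const, card_powersetCard, card_univ, Fintype.card_fin, smul_sum]
  refine sum_congr rfl fun j _ => ?_
  simp only [overlapTerm, nsmul_eq_mul, Nat.cast_mul]
  ring

lemma tendsto_choose_sub_div_pow (m r : ℕ) :
    Tendsto (fun n : ℕ => ((n - m).choose r : ℝ) / (n : ℝ) ^ r) atTop
      (𝓝 (1 / r.factorial)) := by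
  have hsub : (fun n : ℕ => ((n - m : ℕ) : ℝ)) ~[atTop] fun n => (n : ℝ) := by
    refine IsLittleO.congr' (f₁ := fun _ => -(m : ℝ)) ?_ ?_ EventuallyEq.rfl
    · exact isLittleO_const_left.2
        (Or.inr (tendsto_norm_atTop_atTop.comp tendsto_natCast_atTop_atTop))
    · filter_upwards [eventually_ge_atTop m] with n hn
      simp [Nat.cast_sub hn]
  have hequiv := (((isEquivalent_choose r).comp_tendsto (tendsto_sub_atTop_nat m)).trans
    ((hsub.pow r).div IsEquivalent.refl)).div
      (IsEquivalent.refl (u := fun n : ℕ => (n : ℝ) ^ r))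
  refine hequiv.symm.tendsto_nhds (tendsto_const_nhds.congr' ?_)
  filter_upwards [eventually_ne_atTop 0] with n hn
  have : (n : ℝ) ^ r ≠ 0 := pow_ne_zero _ (Nat.cast_ne_zero.2 hn)
  simp only [Pi.div_apply, Pi.pow_apply]
  field_simp

lemma overlapTerm_of_lt_two {n k j : ℕ} (hj : j < 2) (p : ℝ) : overlapTerm n k j p = 0 := by
  rw [overlapTerm, Nat.choose_eq_zero_of_lt hj, Nat.sub_zero, sub_self, mul_zero]

lemma tendsto_overlapTerm_two_div {k : ℕ} (hk : 1 ≤ k) {p : ℕ → ℝ} (hp : ∀ n, p n ≠ 0)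
    (hp0 : Tendsto p atTop (𝓝 0)) :
    Tendsto (fun n : ℕ => overlapTerm n k 2 (p n) /
        ((n : ℝ) ^ (2 * k) * p n ^ (2 * (k + 1).choose 2 - 1))) atTop
      (𝓝 ((k + 1).choose 2 / ((k + 1).factorial * (k - 1).factorial))) := by
  have hlim := (((tendsto_choose_sub_div_pow 0 (k + 1)).mul_const ((k + 1).choose 2 : ℝ)).mul
    (tendsto_choose_sub_div_pow (k + 1) (k - 1))).mul
      ((tendsto_const_nhds (x := (1 : ℝ))).sub hp0)
  rw [sub_zero, mul_one, one_div_mul_eq_div, div_mul_div_comm, mul_one] at hlim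
  refine hlim.congr' ?_
  filter_upwards [eventually_ne_atTop 0] with n hn
  have hn0 : (n : ℝ) ≠ 0 := Nat.cast_ne_zero.2 hn
  have he : 1 ≤ (k + 1).choose 2 := Nat.choose_pos (by omega)
  have hpow_n : (n : ℝ) ^ (2 * k) = (n : ℝ) ^ (k + 1) * (n : ℝ) ^ (k - 1) := by
    rw [← pow_add]; congr 1; omega
  have hpow_p : p n ^ (2 * (k + 1).choose 2) = p n ^ (2 * (k + 1).choose 2 - 1) * p n := by
    rw [← pow_succ]; congr 1; omega
  have := hp n
  rw [overlapTerm, Nat.choose_self, Nat.sub_zero, show k + 1 - 2 = k - 1 by omega, hpow_n,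
    hpow_p]
  field_simp

lemma choose_two_sub_one_le_mul {j k : ℕ} (hj : 2 ≤ j) (hjk : j ≤ k + 1) :
    j.choose 2 - 1 ≤ k * (j - 2) := by
  induction j, hj using Nat.le_induction with
  | base => simp
  | succ j hj ih =>
    have hpos : 1 ≤ j.choose 2 := Nat.choose_pos hj
    have hsucc : (j + 1).choose 2 = j + j.choose 2 := by
      simpa using Nat.choose_succ_succ' j 1
    rw [hsucc, show j + 1 - 2 = j - 2 + 1 by omega, Nat.mul_succ]
    have := ih (by omega)
    omega

lemma pow_sub_choose_two_sub_pow_nonneg (k j : ℕ) {p : ℝ} (hp0 : 0 ≤ p) (hp1 : p ≤ 1) :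
    0 ≤ p ^ (2 * (k + 1).choose 2 - j.choose 2) - p ^ (2 * (k + 1).choose 2) :=
  sub_nonneg.2 (pow_le_pow_of_le_one hp0 hp1 (Nat.sub_le _ _))

lemma overlapTerm_nonneg (n k j : ℕ) {p : ℝ} (hp0 : 0 ≤ p) (hp1 : p ≤ 1) :
    0 ≤ overlapTerm n k j p :=
  mul_nonneg (by positivity) (pow_sub_choose_two_sub_pow_nonneg k j hp0 hp1)

lemma overlapTerm_le {n k j : ℕ} (hjk : j ≤ k + 1) {p : ℝ} (hp0 : 0 ≤ p) (hp1 : p ≤ 1) :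
    overlapTerm n k j p
      ≤ (k + 1).choose j * (n : ℝ) ^ (2 * k + 2 - j) *
          p ^ (2 * (k + 1).choose 2 - j.choose 2) := by
  have hchoose : (n.choose (k + 1) : ℝ) ≤ (n : ℝ) ^ (k + 1) := by
    exact_mod_cast Nat.choose_le_pow _ _
  have hchoose' : ((n - (k + 1)).choose (k + 1 - j) : ℝ) ≤ (n : ℝ) ^ (k + 1 - j) := by
    exact_mod_cast (Nat.choose_le_pow _ _).trans (Nat.pow_le_pow_left (Nat.sub_le _ _) _)
  have hdiff : p ^ (2 * (k + 1).choose 2 - j.choose 2) - p ^ (2 * (k + 1).choose 2)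
      ≤ p ^ (2 * (k + 1).choose 2 - j.choose 2) := sub_le_self _ (by positivity)
  have hdiff_nonneg := pow_sub_choose_two_sub_pow_nonneg k j hp0 hp1
  rw [overlapTerm, show 2 * k + 2 - j = (k + 1) + (k + 1 - j) by omega, pow_add]
  calc _ ≤ (n : ℝ) ^ (k + 1) * ((k + 1).choose j * (n : ℝ) ^ (k + 1 - j)) *
        p ^ (2 * (k + 1).choose 2 - j.choose 2) := by gcongr
    _ = _ := by ring

lemma overlapTerm_div_le {n k j : ℕ} (hn : n ≠ 0) (hj : 2 ≤ j) (hjk : j ≤ k + 1) {p : ℝ}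
    (hp0 : 0 < p) (hp1 : p ≤ 1) :
    overlapTerm n k j p / ((n : ℝ) ^ (2 * k) * p ^ (2 * (k + 1).choose 2 - 1))
      ≤ (k + 1).choose j / ((n : ℝ) * p ^ k) ^ (j - 2) := by
  have hq : 1 ≤ j.choose 2 := Nat.choose_pos hj
  have hqe : j.choose 2 ≤ (k + 1).choose 2 := Nat.choose_le_choose 2 hjk
  have hqk := choose_two_sub_one_le_mul hj hjk
  have hn0 : (0 : ℝ) < n := by exact_mod_cast Nat.pos_of_ne_zero hn
  have hpow_n : (n : ℝ) ^ (2 * k) = (n : ℝ) ^ (2 * k + 2 - j) * (n : ℝ) ^ (j - 2) := by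
    rw [← pow_add]; congr 1; omega
  rw [div_le_iff₀ (by positivity)]
  calc overlapTerm n k j p
      ≤ (k + 1).choose j * (n : ℝ) ^ (2 * k + 2 - j) *
          p ^ (2 * (k + 1).choose 2 - j.choose 2) := overlapTerm_le hjk hp0.le hp1
    _ = (k + 1).choose j / ((n : ℝ) * p ^ k) ^ (j - 2) *
          ((n : ℝ) ^ (2 * k) * p ^ (2 * (k + 1).choose 2 - j.choose 2 + k * (j - 2))) := by
        rw [mul_pow, ← pow_mul, pow_add, hpow_n]
        field_simp
    _ ≤ (k + 1).choose j / ((n : ℝ) * p ^ k) ^ (j - 2) *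
          ((n : ℝ) ^ (2 * k) * p ^ (2 * (k + 1).choose 2 - 1)) := by
        gcongr _ * (_ * ?_)
        exact pow_le_pow_of_le_one hp0.le hp1 (by omega)

lemma tendsto_overlapTerm_div_zero {k j : ℕ} (hj : 3 ≤ j) (hjk : j ≤ k + 1) {p : ℕ → ℝ}
    (hp0 : ∀ n, 0 < p n) (hp1 : ∀ n, p n ≤ 1)
    (hlarge : Tendsto (fun n : ℕ => (n : ℝ) * p n ^ k) atTop atTop) :
    Tendsto (fun n : ℕ => overlapTerm n k j (p n) /
        ((n : ℝ) ^ (2 * k) * p n ^ (2 * (k + 1).choose 2 - 1))) atTop (𝓝 0) := by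
  have hbound : Tendsto (fun n : ℕ => ((k + 1).choose j : ℝ) / ((n : ℝ) * p n ^ k) ^ (j - 2))
      atTop (𝓝 0) :=
    tendsto_const_nhds.div_atTop ((tendsto_pow_atTop (by omega)).comp hlarge)
  refine tendsto_of_tendsto_of_tendsto_of_le_of_le' tendsto_const_nhds hbound
    (.of_forall fun n => div_nonneg (overlapTerm_nonneg _ _ _ (hp0 n).le (hp1 n)) ?_) ?_
  · have := (hp0 n).le
    positivity
  · filter_upwards [eventually_ne_atTop 0] with n hn
    exact overlapTerm_div_le hn (by omega) hjk (hp0 n) (hp1 n)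

/-- for `k ≥ 1` there is a constant `c_k > 0` such that for any
`p_n ∈ (0,1)` with `n·p_n^k → ∞` and `n·p_n^{k+1} → 0`,
`Var(f_k) / (n^{2k} p_n^{2·C(k+1,2) - 1}) → c_k`. -/
theorem variance_asymptotics (k : ℕ) (hk : 1 ≤ k) :
    ∃ c : ℝ, 0 < c ∧ ∀ p : ℕ → ℝ, (∀ n, 0 < p n ∧ p n < 1) →
      Tendsto (fun n : ℕ => (n : ℝ) * p n ^ k) atTop atTop →
      Tendsto (fun n : ℕ => (n : ℝ) * p n ^ (k + 1)) atTop (𝓝 0) →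
      Tendsto (fun n : ℕ =>
          varFK n k (p n) /
            ((n : ℝ) ^ (2 * k) * p n ^ (2 * Nat.choose (k + 1) 2 - 1)))
        atTop (𝓝 c) := by
  have hchoose : (0 : ℝ) < (k + 1).choose 2 := by exact_mod_cast Nat.choose_pos (by omega)
  set c : ℝ := (k + 1).choose 2 / ((k + 1).factorial * (k - 1).factorial)
  refine ⟨c, div_pos hchoose (by positivity), fun p hp hlarge hsmall => ?_⟩
  have hp0 : Tendsto p atTop (𝓝 0) := by
    refine (hsmall.div_atTop hlarge).congr' ?_
    filter_upwards [eventually_ne_atTop 0] with n hn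
    have := (hp n).1.ne'
    field_simp
    ring
  simp_rw [varFK_eq_sum_overlapTerm _ _ (hp _).1.le (hp _).2.le, sum_div]
  rw [← sum_ite_eq_of_mem' (range (k + 2)) 2 (fun _ => c) (mem_range.2 (by omega))]
  refine tendsto_finsetSum _ fun j hj => ?_
  rcases lt_trichotomy j 2 with hj2 | rfl | hj2
  · simp_rw [overlapTerm_of_lt_two hj2, zero_div, if_neg hj2.ne]
    exact tendsto_const_nhds
  · simpa using tendsto_overlapTerm_two_div hk (fun n => (hp n).1.ne') hp0
  · rw [if_neg hj2.ne']
    exact tendsto_overlapTerm_div_zero hj2 (by rw [mem_range] at hj; omega) (fun n => (hp n).1)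
      (fun n => (hp n).2.le) hlarge
end

section
/- Let G be a finite simple graph. Then the number of edges of G whose connected component in G contains at least 5 vertices is at most 4 times the number of subgraphs of G that are trees on 5 vertices, i.e. at most 4 times the number of pairs (W, F) where W is a 5-element set of vertices of G and F is a 4-element set of edges of G with both endpoints in W such that the graph (W, F) is connected (hence a tree). -/
open scoped Classical

/-!
Every edge `e = s(a, b)` of a component with at least five vertices lies in a tree on five
vertices: starting from the tree `{a, b}` with edge `e`, repeatedly attach a vertex outside the
current tree by an edge of `G`, which exists as long as the tree has fewer vertices than the
component. These edges are therefore covered by the edge sets of the five-vertex trees, each of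
which has four elements.
-/

namespace SimpleGraph

variable {V : Type} {G : SimpleGraph V}

def IsConnectedOn (F : Finset (Sym2 V)) (W : Finset V) : Prop :=
  (∀ e ∈ F, ∀ v ∈ e, v ∈ W) ∧
    ∀ u ∈ W, ∀ v ∈ W, (fromEdgeSet (F : Set (Sym2 V))).Reachable u v

lemma isConnectedOn_singleton (a : V) : IsConnectedOn ∅ {a} := by
  refine ⟨by simp, ?_⟩
  simp only [Finset.mem_singleton]
  rintro u rfl v rfl
  rfl

lemma IsConnectedOn.insert_edge [DecidableEq V] {F : Finset (Sym2 V)} {W : Finset V}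
    (h : IsConnectedOn F W) {u v : V} (hu : u ∈ W) (huv : u ≠ v) :
    IsConnectedOn (insert s(u, v) F) (insert v W) := by
  obtain ⟨hsupp, hconn⟩ := h
  have hmono : fromEdgeSet (F : Set (Sym2 V)) ≤ fromEdgeSet ↑(insert s(u, v) F) :=
    fromEdgeSet_mono (by simp)
  have huv' : (fromEdgeSet ↑(insert s(u, v) F)).Adj u v :=
    (fromEdgeSet_adj _).2 ⟨by simp, huv⟩
  have hvW : ∀ w ∈ W, (fromEdgeSet ↑(insert s(u, v) F)).Reachable v w := fun w hw =>
    huv'.reachable.symm.trans ((hconn u hu w hw).mono hmono)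
  refine ⟨?_, ?_⟩
  · simp only [Finset.mem_insert, forall_eq_or_imp, Sym2.mem_iff, forall_eq]
    exact ⟨⟨Or.inr hu, Or.inl trivial⟩, fun e he w hw => Or.inr (hsupp e he w hw)⟩
  · simp only [Finset.mem_insert]
    rintro x (rfl | hx) y (rfl | hy)
    · rfl
    · exact hvW y hy
    · exact (hvW x hx).symm
    · exact (hconn x hx y hy).mono hmono

lemma exists_adj_mem_notMem_of_card_lt [Fintype V] {W : Finset V} {a : V} (ha : a ∈ W)
    (hW : W.card < {w | G.Reachable a w}.ncard) : ∃ u ∈ W, ∃ v ∉ W, G.Adj u v := by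
  obtain ⟨x, ⟨p⟩, hx⟩ : ∃ x, G.Reachable a x ∧ x ∉ W := by
    by_contra! hsub
    have := Set.ncard_le_ncard (s := {w | G.Reachable a w}) (t := ↑W) hsub
    rw [Set.ncard_coe_finset] at this
    omega
  obtain ⟨d, -, hd, hd'⟩ := p.exists_boundary_dart W ha hx
  exact ⟨d.fst, hd, d.snd, hd', d.adj⟩

lemma IsConnectedOn.exists_extension [Fintype V] {F : Finset (Sym2 V)} {W : Finset V}
    (h : IsConnectedOn F W) (hFG : F ⊆ G.edgeFinset) (hcard : F.card + 1 = W.card) {a : V}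
    (ha : a ∈ W) {k : ℕ} (hWk : W.card ≤ k) (hk : k ≤ {w | G.Reachable a w}.ncard) :
    ∃ F' W', F ⊆ F' ∧ W ⊆ W' ∧ IsConnectedOn F' W' ∧ F' ⊆ G.edgeFinset ∧
      F'.card + 1 = k ∧ W'.card = k := by
  induction k, hWk using Nat.le_induction with
  | base => exact ⟨F, W, subset_rfl, subset_rfl, h, hFG, hcard, rfl⟩
  | succ k hWk ih =>
    obtain ⟨F', W', hFF', hWW', hconn, hF'G, hF'card, hW'card⟩ := ih (by omega)
    obtain ⟨u, hu, v, hv, huv⟩ := exists_adj_mem_notMem_of_card_lt (G := G) (hWW' ha) (by omega)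
    have hnew : s(u, v) ∉ F' := fun he => hv (hconn.1 _ he v (Sym2.mem_mk_right u v))
    refine ⟨insert s(u, v) F', insert v W', hFF'.trans (Finset.subset_insert _ _),
      hWW'.trans (Finset.subset_insert _ _), hconn.insert_edge hu huv.ne, ?_, ?_, ?_⟩
    · exact Finset.insert_subset (mem_edgeFinset.2 huv) hF'G
    · rw [Finset.card_insert_of_notMem hnew, hF'card]
    · rw [Finset.card_insert_of_notMem hv, hW'card]

lemma exists_isConnectedOn_of_adj [Fintype V] {a b : V} (hab : G.Adj a b) {k : ℕ} (hk2 : 2 ≤ k)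
    (hk : k ≤ {w | G.Reachable a w}.ncard) :
    ∃ F W, s(a, b) ∈ F ∧ IsConnectedOn F W ∧ F ⊆ G.edgeFinset ∧ F.card + 1 = k ∧
      W.card = k := by
  have hedge : IsConnectedOn {s(a, b)} {b, a} :=
    (isConnectedOn_singleton a).insert_edge (Finset.mem_singleton_self a) hab.ne
  obtain ⟨F, W, hF, -, hconn, hFG, hFcard, hWcard⟩ :=
    hedge.exists_extension (by simpa using hab) (by simp [hab.ne']) (by simp)
      (by simp [hab.ne', hk2]) hk
  exact ⟨F, W, hF (Finset.mem_singleton_self _), hconn, hFG, hFcard, hWcard⟩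

end SimpleGraph

/-- in a finite simple graph `G`, the number of edges whose connected
component contains at least 5 vertices is at most 4 times the number of subgraphs of `G`
that are trees on 5 vertices, i.e. pairs `(W, F)` with `W` a 5-element vertex set, `F` a
4-element set of edges of `G` with both endpoints in `W`, such that `(W, F)` is
connected. -/
theorem edges_in_big_components_le_four_times_trees (V : Type) [Fintype V] [DecidableEq V]
    (G : SimpleGraph V) :
    (G.edgeFinset.filter
        (fun e => ∀ v ∈ e, 5 ≤ {w : V | G.Reachable v w}.ncard)).card ≤
      4 * ((((Finset.univ : Finset V).powersetCard 5) ×ˢ (G.edgeFinset.powersetCard 4)).filter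
        (fun p => (∀ e ∈ p.2, ∀ v ∈ e, v ∈ p.1) ∧
          ∀ u ∈ p.1, ∀ v ∈ p.1,
            (SimpleGraph.fromEdgeSet (p.2 : Set (Sym2 V))).Reachable u v)).card := by
  set T := (((Finset.univ : Finset V).powersetCard 5) ×ˢ (G.edgeFinset.powersetCard 4)).filter
    (fun p => (∀ e ∈ p.2, ∀ v ∈ e, v ∈ p.1) ∧
      ∀ u ∈ p.1, ∀ v ∈ p.1, (SimpleGraph.fromEdgeSet (p.2 : Set (Sym2 V))).Reachable u v)
  have hcover : G.edgeFinset.filter (fun e => ∀ v ∈ e, 5 ≤ {w | G.Reachable v w}.ncard) ⊆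
      T.biUnion Prod.snd := by
    intro e he
    obtain ⟨he, hbig⟩ := Finset.mem_filter.1 he
    induction e using Sym2.ind with | h a b =>
    obtain ⟨F, W, heF, hconn, hFG, hFcard, hWcard⟩ :=
      SimpleGraph.exists_isConnectedOn_of_adj (k := 5)
        (SimpleGraph.mem_edgeFinset.1 he) (by norm_num) (hbig a (Sym2.mem_mk_left a b))
    refine Finset.mem_biUnion.2 ⟨(W, F), Finset.mem_filter.2 ⟨?_, hconn⟩, heF⟩
    exact Finset.mem_product.2 ⟨Finset.mem_powersetCard.2 ⟨Finset.subset_univ _, hWcard⟩,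
      Finset.mem_powersetCard.2 ⟨hFG, Nat.succ_injective hFcard⟩⟩
  calc _ ≤ (T.biUnion Prod.snd).card := Finset.card_le_card hcover
    _ ≤ T.card * 4 := Finset.card_biUnion_le_card_mul _ _ _ fun p hp =>
        (Finset.mem_powersetCard.1 (Finset.mem_product.1 (Finset.mem_filter.1 hp).1).2).2.le
    _ = 4 * T.card := mul_comm _ _
end
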